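/- Let (H_k)_{k∈ℕ} be a sequence of real inner product spaces with linear subspaces D_k ⊆ H_k and functions q_k : D_k → ℝ nonnegative on D_k, and let H be a real inner product space with a linear subspace D ⊆ H and a function q : D → ℝ nonnegative on D. Let n ≥ 1 and Λ > 0 be such that μ_n(q) < Λ and μ_n(q_k) < Λ for all k. Suppose there are real numbers δ_k ≥ 0 with δ_k → 0, linear maps J_k : D_k → D such that every u ∈ D_k with q_k(u) ≤ Λ‖u‖² satisfies |‖u‖² − ‖J_k u‖²| ≤ δ_k(‖u‖² + q_k(u)) and q(J_k u) − q_k(u) ≤ δ_k · q_k(u), and linear maps K_k : D → D_k such that every u ∈ D with q(u) ≤ Λ‖u‖² satisfies |‖u‖² − ‖K_k u‖²| ≤ δ_k(‖u‖² + q(u)) and q_k(K_k u) − q(u) ≤ δ_k · q(u). Then μ_n(q_k) → μ_n(q) as k → ∞. -/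
import Mathlib


/-- The `n`-th min-max value of a function `q` (an abstract energy form) on a linear
subspace `D` of a real inner product space `H`: the infimum, over all `n`-dimensional
linear subspaces `W` of `D`, of the supremum over nonzero `x ∈ W` of the Rayleigh
quotient `q x / ‖x‖²`, computed in the extended reals (so it is `+∞` when `D` contains
no `n`-dimensional subspace). -/
noncomputable def minmaxVal {H : Type*} [NormedAddCommGroup H] [InnerProductSpace ℝ H]
    (D : Submodule ℝ H) (q : H → ℝ) (n : ℕ) : EReal :=
  ⨅ W : {W : Submodule ℝ H // W ≤ D ∧ FiniteDimensional ℝ W ∧ Module.finrank ℝ W = n},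
    ⨆ x : {x : H // x ∈ W.1 ∧ x ≠ 0}, ((q x.1 / ‖x.1‖ ^ 2 : ℝ) : EReal)

lemma minmaxVal_nonneg {H : Type*} [NormedAddCommGroup H] [InnerProductSpace ℝ H]
    (D : Submodule ℝ H) (q : H → ℝ) (hq : ∀ u ∈ D, 0 ≤ q u) {n : ℕ} (hn : 1 ≤ n) :
    (0 : EReal) ≤ minmaxVal D q n := by
  refine le_iInf fun W => ?_
  obtain ⟨hle, hfd, hrank⟩ := W.2
  have hWbot : W.1 ≠ ⊥ := by
    intro h
    rw [h, finrank_bot] at hrank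
    omega
  obtain ⟨x, hx, hx0⟩ := Submodule.exists_mem_ne_zero_of_ne_bot hWbot
  refine le_trans ?_ (le_iSup _ ⟨x, hx, hx0⟩)
  have : (0:ℝ) ≤ q x / ‖x‖ ^ 2 := div_nonneg (hq x (hle hx)) (by positivity)
  exact_mod_cast this

lemma minmaxVal_le_of_map
    {H₁ : Type*} [NormedAddCommGroup H₁] [InnerProductSpace ℝ H₁]
    {H₂ : Type*} [NormedAddCommGroup H₂] [InnerProductSpace ℝ H₂]
    (D₁ : Submodule ℝ H₁) (D₂ : Submodule ℝ H₂)
    (q₁ : H₁ → ℝ) (q₂ : H₂ → ℝ) (hq₁ : ∀ u ∈ D₁, 0 ≤ q₁ u)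
    (n : ℕ) (Λ : ℝ) (δ : ℝ) (hδ0 : 0 ≤ δ) (hc1 : δ * (1 + Λ) < 1)
    (T : D₁ →ₗ[ℝ] D₂)
    (hiso : ∀ u : D₁, q₁ u ≤ Λ * ‖u‖ ^ 2 → |‖u‖ ^ 2 - ‖T u‖ ^ 2| ≤ δ * (‖u‖ ^ 2 + q₁ u))
    (hen : ∀ u : D₁, q₁ u ≤ Λ * ‖u‖ ^ 2 → q₂ (T u) - q₁ u ≤ δ * q₁ u)
    (s : ℝ) (hs0 : 0 ≤ s) (hsΛ : s ≤ Λ)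
    (hwit : minmaxVal D₁ q₁ n < (s : EReal)) :
    minmaxVal D₂ q₂ n ≤ (((1 + δ) * s / (1 - δ * (1 + Λ)) : ℝ) : EReal) := by
  obtain ⟨W, hWlt⟩ := iInf_lt_iff.mp hwit
  obtain ⟨hle, hfd, hrank⟩ := W.2
  haveI : FiniteDimensional ℝ W.1 := hfd
  set c : ℝ := δ * (1 + Λ) with hcdef
  have h1c : 0 < 1 - c := by linarith
  -- pointwise facts
  have key : ∀ z : W.1, (z : H₁) ≠ 0 → q₁ (z : H₁) < s * ‖(z : H₁)‖ ^ 2 := by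
    intro z hz0
    have hle' := lt_of_le_of_lt (le_iSup _ ⟨(z : H₁), z.2, hz0⟩ :
      _ ≤ ⨆ x : {x : H₁ // x ∈ W.1 ∧ x ≠ 0}, ((q₁ x.1 / ‖x.1‖ ^ 2 : ℝ) : EReal)) hWlt
    have hr := EReal.coe_lt_coe_iff.mp hle'
    have hx2 : (0:ℝ) < ‖(z : H₁)‖ ^ 2 := pow_pos (norm_pos_iff.mpr hz0) 2
    exact (div_lt_iff₀ hx2).mp hr
  have keyΛ : ∀ z : W.1, (z : H₁) ≠ 0 →
      q₁ ((Submodule.inclusion hle z : D₁) : H₁) ≤ Λ * ‖(Submodule.inclusion hle z : D₁)‖ ^ 2 := by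
    intro z hz0
    have h1 := key z hz0
    have hco : ((Submodule.inclusion hle z : D₁) : H₁) = (z : H₁) := rfl
    have hn : ‖(Submodule.inclusion hle z : D₁)‖ = ‖(z : H₁)‖ := rfl
    rw [hco, hn]
    nlinarith [sq_nonneg ‖(z : H₁)‖]
  have keynorm : ∀ z : W.1, (z : H₁) ≠ 0 →
      (1 - c) * ‖(z : H₁)‖ ^ 2 ≤ ‖T (Submodule.inclusion hle z)‖ ^ 2 := by
    intro z hz0
    have h1 := hiso _ (keyΛ z hz0)
    have h2 := keyΛ z hz0
    have hn : ‖(Submodule.inclusion hle z : D₁)‖ = ‖(z : H₁)‖ := rfl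
    rw [hn] at h1 h2
    have hco : q₁ ((Submodule.inclusion hle z : D₁) : H₁) = q₁ (z : H₁) := rfl
    rw [hco] at h1 h2
    have habs := abs_le.mp h1
    have hq0 : 0 ≤ q₁ (z : H₁) := hq₁ _ (hle z.2)
    nlinarith [sq_nonneg ‖(z : H₁)‖]
  -- the mapped subspace
  set L : W.1 →ₗ[ℝ] H₂ := D₂.subtype ∘ₗ T ∘ₗ Submodule.inclusion hle with hLdef
  have hLco : ∀ z : W.1, L z = ((T (Submodule.inclusion hle z) : D₂) : H₂) := fun z => rfl
  have hinj : Function.Injective L := by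
    rw [← LinearMap.ker_eq_bot, LinearMap.ker_eq_bot']
    intro z hz
    by_contra h0
    have hz0 : (z : H₁) ≠ 0 := fun h => h0 (Subtype.ext h)
    have h1 := keynorm z hz0
    have h2 : ‖T (Submodule.inclusion hle z)‖ = 0 := by
      have : ((T (Submodule.inclusion hle z) : D₂) : H₂) = 0 := by rw [← hLco z, hz]
      have : T (Submodule.inclusion hle z) = 0 := Subtype.ext this
      rw [this, norm_zero]
    rw [h2] at h1
    have hx2 : (0:ℝ) < ‖(z : H₁)‖ ^ 2 := pow_pos (norm_pos_iff.mpr hz0) 2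
    nlinarith
  have hW'le : LinearMap.range L ≤ D₂ := by
    rintro y ⟨z, rfl⟩
    exact (T (Submodule.inclusion hle z)).2
  have hrank' : Module.finrank ℝ (LinearMap.range L) = n := by
    rw [LinearMap.finrank_range_of_inj hinj, hrank]
  refine le_trans (iInf_le _ ⟨LinearMap.range L, hW'le, inferInstance, hrank'⟩) (iSup_le ?_)
  rintro ⟨y, hy, hy0⟩
  obtain ⟨z, rfl⟩ := hy
  simp only
  have hz0 : (z : H₁) ≠ 0 := by
    intro h
    apply hy0
    have : z = 0 := Subtype.ext h
    rw [this, map_zero]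
  rw [EReal.coe_le_coe_iff]
  set x : H₁ := (z : H₁)
  have hx2 : (0:ℝ) < ‖x‖ ^ 2 := pow_pos (norm_pos_iff.mpr hz0) 2
  have hnLz : ‖L z‖ = ‖T (Submodule.inclusion hle z)‖ := rfl
  have hy2 : (1 - c) * ‖x‖ ^ 2 ≤ ‖L z‖ ^ 2 := by rw [hnLz]; exact keynorm z hz0
  have hLz2 : (0:ℝ) < ‖L z‖ ^ 2 := lt_of_lt_of_le (by positivity) hy2
  have h1 : q₂ (L z) ≤ (1 + δ) * q₁ x := by
    have := hen _ (keyΛ z hz0)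
    have hco : q₂ ((T (Submodule.inclusion hle z) : D₂) : H₂) = q₂ (L z) := rfl
    have hco2 : q₁ ((Submodule.inclusion hle z : D₁) : H₁) = q₁ x := rfl
    rw [hco, hco2] at this
    linarith
  have h2 : q₁ x ≤ s * ‖x‖ ^ 2 := (key z hz0).le
  set B : ℝ := (1 + δ) * s / (1 - c)
  have hB0 : 0 ≤ B := div_nonneg (by nlinarith) h1c.le
  have hBc : B * (1 - c) = (1 + δ) * s := div_mul_cancel₀ _ h1c.ne'
  rw [div_le_iff₀ hLz2]
  have h3 : (1 + δ) * q₁ x ≤ (1 + δ) * (s * ‖x‖ ^ 2) :=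
    mul_le_mul_of_nonneg_left h2 (by linarith)
  have h4 : B * ((1 - c) * ‖x‖ ^ 2) ≤ B * ‖L z‖ ^ 2 := mul_le_mul_of_nonneg_left hy2 hB0
  have h5 : (1 + δ) * (s * ‖x‖ ^ 2) = B * ((1 - c) * ‖x‖ ^ 2) := by
    rw [← mul_assoc, ← hBc]; ring
  linarith

lemma ratio_bound (Λ δ s : ℝ) (hΛ : 0 < Λ) (hδ : 0 ≤ δ) (hc : δ * (1 + Λ) ≤ 1/2)
    (hs0 : 0 ≤ s) (hsΛ : s ≤ Λ) :
    (1 + δ) * s / (1 - δ * (1 + Λ)) ≤ s + 2 * Λ * δ * (2 + Λ) := by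
  have h1c : 0 < 1 - δ * (1 + Λ) := by linarith
  rw [div_le_iff₀ h1c]
  nlinarith [mul_nonneg (mul_nonneg hδ (by linarith : (0:ℝ) ≤ 2 + Λ)) (by linarith : 0 ≤ Λ - s),
    mul_nonneg (mul_nonneg (mul_nonneg hδ (by linarith : (0:ℝ) ≤ 2 + Λ)) (by linarith : (0:ℝ) ≤ 2 * Λ))
      (by linarith : 0 ≤ 1/2 - δ * (1 + Λ))]

/-- Abstract spectral convergence (the paper's Theorem 2.2): if there
are "averaging" maps `J_k : D_k → D` and "extension" maps `K_k : D → D_k` that are near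
isometries with `H¹`-type error `δ_k → 0` and increase energy by a relative error at
most `δ_k`, on vectors with Rayleigh quotient at most `Λ`, and if `μ_n(q) < Λ` and
`μ_n(q_k) < Λ` for all `k`, then `μ_n(q_k) → μ_n(q)`. -/
theorem minmax_tendsto_of_averaging_and_extension
    {H : Type*} [NormedAddCommGroup H] [InnerProductSpace ℝ H]
    (Hk : ℕ → Type*) [∀ k, NormedAddCommGroup (Hk k)] [∀ k, InnerProductSpace ℝ (Hk k)]
    (D : Submodule ℝ H) (Dk : ∀ k, Submodule ℝ (Hk k))
    (q : H → ℝ) (qk : ∀ k, Hk k → ℝ)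
    (hq : ∀ u ∈ D, 0 ≤ q u) (hqk : ∀ k, ∀ u ∈ Dk k, 0 ≤ qk k u)
    (n : ℕ) (hn : 1 ≤ n) (Λ : ℝ) (hΛ : 0 < Λ)
    (hμΛ : minmaxVal D q n < (Λ : EReal))
    (hμkΛ : ∀ k, minmaxVal (Dk k) (qk k) n < (Λ : EReal))
    (δ : ℕ → ℝ) (hδ0 : ∀ k, 0 ≤ δ k)
    (hδlim : Filter.Tendsto δ Filter.atTop (nhds 0))
    (J : ∀ k, Dk k →ₗ[ℝ] D)
    (hisoJ : ∀ k, ∀ u : Dk k, qk k u ≤ Λ * ‖u‖ ^ 2 →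
      |‖u‖ ^ 2 - ‖J k u‖ ^ 2| ≤ δ k * (‖u‖ ^ 2 + qk k u))
    (henergyJ : ∀ k, ∀ u : Dk k, qk k u ≤ Λ * ‖u‖ ^ 2 →
      q (J k u) - qk k u ≤ δ k * qk k u)
    (K : ∀ k, D →ₗ[ℝ] Dk k)
    (hisoK : ∀ k, ∀ u : D, q u ≤ Λ * ‖u‖ ^ 2 →
      |‖u‖ ^ 2 - ‖K k u‖ ^ 2| ≤ δ k * (‖u‖ ^ 2 + q u))
    (henergyK : ∀ k, ∀ u : D, q u ≤ Λ * ‖u‖ ^ 2 →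
      qk k (K k u) - q u ≤ δ k * q u) :
    Filter.Tendsto (fun k => minmaxVal (Dk k) (qk k) n) Filter.atTop
      (nhds (minmaxVal D q n)) := by
  have hμ0 : (0 : EReal) ≤ minmaxVal D q n := minmaxVal_nonneg D q hq hn
  have hμk0 : ∀ k, (0 : EReal) ≤ minmaxVal (Dk k) (qk k) n :=
    fun k => minmaxVal_nonneg (Dk k) (qk k) (hqk k) hn
  have hne : ∀ (E : EReal), (0 : EReal) ≤ E → E < (Λ : EReal) → ((E.toReal : ℝ) : EReal) = E := by
    intro E h0 hlt
    refine EReal.coe_toReal (ne_top_of_lt hlt) ?_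
    intro h
    rw [h] at h0
    exact absurd h0 (by simp)
  set m : ℝ := (minmaxVal D q n).toReal with hmdef
  have hμeq : ((m : ℝ) : EReal) = minmaxVal D q n := hne _ hμ0 hμΛ
  set r : ℕ → ℝ := fun k => (minmaxVal (Dk k) (qk k) n).toReal with hrdef
  have hμkeq : ∀ k, ((r k : ℝ) : EReal) = minmaxVal (Dk k) (qk k) n :=
    fun k => hne _ (hμk0 k) (hμkΛ k)
  have hm0 : 0 ≤ m := by
    have := hμ0; rw [← hμeq] at this; exact_mod_cast this
  have hmΛ : m < Λ := by
    have := hμΛ; rw [← hμeq] at this; exact_mod_cast this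
  have hr0 : ∀ k, 0 ≤ r k := by
    intro k; have := hμk0 k; rw [← hμkeq k] at this; exact_mod_cast this
  have hrΛ : ∀ k, r k < Λ := by
    intro k; have := hμkΛ k; rw [← hμkeq k] at this; exact_mod_cast this
  have hfun : (fun k => minmaxVal (Dk k) (qk k) n) = fun k => ((r k : ℝ) : EReal) :=
    funext fun k => (hμkeq k).symm
  rw [hfun, ← hμeq]
  rw [EReal.tendsto_coe]
  -- now a real-number limit
  rw [Metric.tendsto_atTop]
  intro ε hε
  have h1 : Filter.Tendsto (fun k => δ k * (1 + Λ)) Filter.atTop (nhds 0) := by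
    have := hδlim.mul_const (1 + Λ); simpa using this
  have h2 : Filter.Tendsto (fun k => 2 * Λ * δ k * (2 + Λ)) Filter.atTop (nhds 0) := by
    have := (hδlim.const_mul (2 * Λ)).mul_const (2 + Λ); simpa [mul_assoc] using this
  have ev1 := h1.eventually (gt_mem_nhds (by norm_num : (0:ℝ) < 1/2))
  have ev2 := h2.eventually (gt_mem_nhds (by positivity : (0:ℝ) < ε/4))
  have hev : ∀ᶠ k in Filter.atTop, dist (r k) m < ε := by
    filter_upwards [ev1, ev2] with k hk1 hk2
    have hc1 : δ k * (1 + Λ) < 1 := by linarith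
    have h1c : 0 < 1 - δ k * (1 + Λ) := by linarith
    -- upper bound: r k ≤ m + ε/2
    have hupper : r k ≤ m + ε / 2 := by
      set s : ℝ := min (m + ε/4) Λ with hsdef
      have hs0 : 0 ≤ s := le_min (by linarith) hΛ.le
      have hsΛ : s ≤ Λ := min_le_right _ _
      have hwit : minmaxVal D q n < (s : EReal) := by
        rw [← hμeq]
        exact_mod_cast lt_min (by linarith) hmΛ
      have hbd := minmaxVal_le_of_map D (Dk k) q (qk k) hq n Λ (δ k) (hδ0 k) hc1
        (K k) (hisoK k) (henergyK k) s hs0 hsΛ hwit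
      have hr : r k ≤ (1 + δ k) * s / (1 - δ k * (1 + Λ)) := by
        rw [← hμkeq k] at hbd
        exact_mod_cast hbd
      have hrb := ratio_bound Λ (δ k) s hΛ (hδ0 k) hk1.le hs0 hsΛ
      have hs4 : s ≤ m + ε/4 := min_le_left _ _
      linarith
    -- lower bound: m ≤ r k + ε/2
    have hlower : m ≤ r k + ε / 2 := by
      set s : ℝ := min (r k + ε/4) Λ with hsdef
      have hs0 : 0 ≤ s := le_min (by linarith [hr0 k]) hΛ.le
      have hsΛ : s ≤ Λ := min_le_right _ _
      have hwit : minmaxVal (Dk k) (qk k) n < (s : EReal) := by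
        rw [← hμkeq k]
        exact_mod_cast lt_min (by linarith) (hrΛ k)
      have hbd := minmaxVal_le_of_map (Dk k) D (qk k) q (hqk k) n Λ (δ k) (hδ0 k) hc1
        (J k) (hisoJ k) (henergyJ k) s hs0 hsΛ hwit
      have hr : m ≤ (1 + δ k) * s / (1 - δ k * (1 + Λ)) := by
        rw [← hμeq] at hbd
        exact_mod_cast hbd
      have hrb := ratio_bound Λ (δ k) s hΛ (hδ0 k) hk1.le hs0 hsΛ
      have hs4 : s ≤ r k + ε/4 := min_le_left _ _
      linarith
    rw [Real.dist_eq, abs_sub_lt_iff]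
    constructor <;> linarith
  exact Filter.eventually_atTop.mp hev
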